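/- The space X = {(q, ε) : q an invertible symmetric 2n×2n complex matrix, ε² = det q} is a connected double cover of the space of invertible symmetric matrices via (q, ε) ↦ q: every fiber has exactly two points, and X is connected. -/

import Mathlib

open Matrix Polynomial QuadraticMap

section Aux

lemma aux_sq_eq {a b : ℂ} (h : a ^ 2 = b ^ 2) : a = b ∨ a = -b := by
  have h0 : (a - b) * (a + b) = 0 := by ring_nf; linear_combination h
  rcases mul_eq_zero.1 h0 with h' | h'
  · exact Or.inl (sub_eq_zero.1 h')
  · exact Or.inr (eq_neg_of_add_eq_zero_left h')

lemma aux_sumSq_eq {m : ℕ} :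
    (weightedSumSquares ℂ (1 : Fin m → ℂ)) = (1 : Matrix (Fin m) (Fin m) ℂ).toQuadraticMap' := by
  ext x
  simp [weightedSumSquares_apply, Matrix.toQuadraticMap',
    LinearMap.BilinMap.toQuadraticMap_apply, Matrix.toLinearMap₂'_apply, Matrix.one_apply,
    smul_eq_mul, mul_comm, Matrix.toQuadraticForm']

lemma aux_isSymm_bilin {m : ℕ} {q : Matrix (Fin m) (Fin m) ℂ} (hs : q.IsSymm) :
    (Matrix.toLinearMap₂' ℂ q).IsSymm := by
  refine ⟨fun x y => ?_⟩
  simp only [RingHom.id_apply, Matrix.toLinearMap₂'_apply]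
  rw [Finset.sum_comm]
  refine Finset.sum_congr rfl fun i _ => Finset.sum_congr rfl fun j _ => ?_
  have h2 : q j i = q i j := congrFun (congrFun hs i) j
  rw [h2, smul_comm]

lemma aux_toMatrix'_toQuadraticMap' {m : ℕ} {q : Matrix (Fin m) (Fin m) ℂ} (hs : q.IsSymm) :
    (q.toQuadraticMap').toMatrix' = q := by
  unfold Matrix.toQuadraticMap' Matrix.toQuadraticForm' QuadraticForm.toMatrix'
  rw [QuadraticMap.associated_left_inverse _ (aux_isSymm_bilin hs).eq]
  exact LinearMap.toMatrix'_toLinearMap₂' q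

/-- Every invertible symmetric complex matrix factors as `Aᵀ * A`. -/
lemma aux_factor {m : ℕ} (q : Matrix (Fin m) (Fin m) ℂ) (hs : q.IsSymm) (hu : IsUnit q) :
    ∃ A : Matrix (Fin m) (Fin m) ℂ, Aᵀ * A = q := by
  have hdet : q.det ≠ 0 := by
    simpa [isUnit_iff_ne_zero] using (Matrix.isUnit_iff_isUnit_det q).1 hu
  set Q : QuadraticForm ℂ (Fin m → ℂ) := q.toQuadraticMap' with hQ
  have hassoc : QuadraticMap.associated (R := ℂ) Q = Matrix.toLinearMap₂' ℂ q :=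
    QuadraticMap.associated_left_inverse _ (aux_isSymm_bilin hs).eq
  have hsep : (QuadraticMap.associated (R := ℂ) Q).SeparatingLeft := by
    rw [hassoc, Matrix.separatingLeft_toLinearMap₂'_iff]
    exact Matrix.nondegenerate_iff_separatingLeft.1 (Matrix.Nondegenerate.of_det_ne_zero hdet)
  have hEq := Q.equivalent_sum_squares hsep
  rw [show Module.finrank ℂ (Fin m → ℂ) = m from Module.finrank_fin_fun ℂ] at hEq
  obtain ⟨g⟩ := hEq
  have hcomp : Q = (weightedSumSquares ℂ (1 : Fin m → ℂ)).comp g.toLinearEquiv.toLinearMap := by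
    ext x
    simp only [QuadraticMap.comp_apply, LinearEquiv.coe_coe]
    exact (g.map_app x).symm
  have hW : QuadraticForm.toMatrix' (weightedSumSquares ℂ (1 : Fin m → ℂ)) = 1 := by
    rw [aux_sumSq_eq]; exact aux_toMatrix'_toQuadraticMap' Matrix.isSymm_one
  have hq' : Q.toMatrix' = q := aux_toMatrix'_toQuadraticMap' hs
  refine ⟨LinearMap.toMatrix' g.toLinearEquiv.toLinearMap, ?_⟩
  have h1 := congrArg QuadraticForm.toMatrix' hcomp
  rw [QuadraticForm.toMatrix'_comp] at h1
  simp only [hW, hq', mul_one] at h1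
  exact h1.symm

/-- The invertible complex matrices form a path-connected set. -/
lemma aux_pathConn {m : ℕ} :
    IsPathConnected {A : Matrix (Fin m) (Fin m) ℂ | IsUnit A} := by
  have key : ∀ A B : Matrix (Fin m) (Fin m) ℂ, IsUnit A → IsUnit B →
      JoinedIn {A : Matrix (Fin m) (Fin m) ℂ | IsUnit A} A B := by
    intro A B hA hB
    set f : ℂ → Matrix (Fin m) (Fin m) ℂ := fun z => A + z • (B - A) with hf
    have hcf : Continuous f := continuous_const.add (continuous_id.smul continuous_const)
    set p : Polynomial ℂ :=
      (A.map Polynomial.C + (Polynomial.X : ℂ[X]) • (B - A).map Polynomial.C).det with hp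
    have heval : ∀ t : ℂ, p.eval t = (f t).det := by
      intro t
      have := (Polynomial.evalRingHom t).map_det
        (A.map Polynomial.C + (Polynomial.X : ℂ[X]) • (B - A).map Polynomial.C)
      rw [hp]
      rw [show (Polynomial.evalRingHom t) ((A.map Polynomial.C +
        (Polynomial.X : ℂ[X]) • (B - A).map Polynomial.C).det) = p.eval t from rfl] at this
      rw [this]
      congr 1
      ext i j
      simp [f, Matrix.map_apply, Matrix.add_apply, Matrix.smul_apply, Matrix.sub_apply,
        smul_eq_mul]
    have hf0 : f 0 = A := by simp [f]
    have hf1 : f 1 = B := by simp [f]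
    have h0 : p.eval 0 ≠ 0 := by
      rw [heval, hf0]
      simpa [isUnit_iff_ne_zero] using (Matrix.isUnit_iff_isUnit_det A).1 hA
    have h1 : p.eval 1 ≠ 0 := by
      rw [heval, hf1]
      simpa [isUnit_iff_ne_zero] using (Matrix.isUnit_iff_isUnit_det B).1 hB
    have hpne : p ≠ 0 := fun h => h0 (by simp [h])
    have hfin : {t : ℂ | p.IsRoot t}.Countable :=
      (Polynomial.finite_setOf_isRoot hpne).countable
    have hpc : IsPathConnected {t : ℂ | p.IsRoot t}ᶜ := by
      apply hfin.isPathConnected_compl_of_one_lt_rank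
      rw [Complex.rank_real_complex]
      norm_num
    obtain ⟨γ, hγ⟩ := hpc.joinedIn 0 h0 1 h1
    refine ⟨(γ.map hcf).cast (by simp [hf0]) (by simp [hf1]), ?_⟩
    intro t
    show IsUnit (f (γ t))
    rw [Matrix.isUnit_iff_isUnit_det, isUnit_iff_ne_zero, ← heval]
    exact hγ t
  exact ⟨1, isUnit_one, fun _ hy => key 1 _ isUnit_one hy⟩

end Aux

/-- X = {(q, ε) : q invertible symmetric 2n×2n complex, ε² = det q} is a connected double
cover of the space of invertible symmetric matrices via (q, ε) ↦ q: every fiber has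
exactly two points, and X is connected. -/
theorem stmt_16 (n : ℕ) (hn : 0 < n)
    (X : Set (Matrix (Fin (2 * n)) (Fin (2 * n)) ℂ × ℂ))
    (hX : X = {p | p.1.IsSymm ∧ IsUnit p.1 ∧ p.2 ^ 2 = p.1.det}) :
    (∀ q : Matrix (Fin (2 * n)) (Fin (2 * n)) ℂ, q.IsSymm → IsUnit q →
      Set.ncard {ε : ℂ | (q, ε) ∈ X} = 2) ∧
    IsConnected X := by
  haveI : NeZero (2 * n) := ⟨by omega⟩
  constructor
  · intro q hs hu
    have hdet : q.det ≠ 0 := by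
      simpa [isUnit_iff_ne_zero] using (Matrix.isUnit_iff_isUnit_det q).1 hu
    obtain ⟨c, hc⟩ := IsAlgClosed.exists_pow_nat_eq q.det (n := 2) (by norm_num)
    have hc0 : c ≠ 0 := fun h => hdet (by rw [← hc, h]; ring)
    have hset : {ε : ℂ | (q, ε) ∈ X} = {c, -c} := by
      ext ε
      simp only [hX, Set.mem_setOf_eq, Set.mem_insert_iff, Set.mem_singleton_iff, hs, hu,
        true_and]
      constructor
      · intro h
        exact aux_sq_eq (by rw [h, hc])
      · rintro (rfl | rfl) <;> simp [hc]
    rw [hset]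
    exact Set.ncard_pair (fun h => hc0 (add_self_eq_zero.1 (by linear_combination h)))
  · set φ : Matrix (Fin (2 * n)) (Fin (2 * n)) ℂ → Matrix (Fin (2 * n)) (Fin (2 * n)) ℂ × ℂ :=
      fun A => (Aᵀ * A, A.det) with hφ
    have hφc : Continuous φ :=
      (continuous_id.matrix_transpose.matrix_mul continuous_id).prodMk continuous_id.matrix_det
    have himg : X = φ '' {A | IsUnit A} := by
      apply Set.eq_of_subset_of_subset
      · rintro ⟨q, ε⟩ hmem
        rw [hX] at hmem
        obtain ⟨hs, hu, hε⟩ := hmem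
        obtain ⟨A, hA⟩ := aux_factor q hs hu
        have hdetA : (A.det) ^ 2 = q.det := by
          rw [← hA, Matrix.det_mul, Matrix.det_transpose, _root_.sq]
        have hAu : IsUnit A := by
          rw [Matrix.isUnit_iff_isUnit_det, isUnit_iff_ne_zero]
          intro h
          rw [Matrix.isUnit_iff_isUnit_det, isUnit_iff_ne_zero] at hu
          exact hu (by rw [← hdetA, h]; ring)
        rcases aux_sq_eq (hdetA.trans hε.symm) with h | h
        · exact ⟨A, hAu, by simp [φ, hA, h]⟩
        · set d : Fin (2 * n) → ℂ := fun i => if i = 0 then -1 else 1 with hd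
          have hdd : ∀ i, d i * d i = 1 := by intro i; by_cases h : i = 0 <;> simp [d, h]
          set D := Matrix.diagonal d with hD
          have hDD : D * D = 1 := by
            rw [hD, Matrix.diagonal_mul_diagonal]
            simp only [hdd]
            rfl
          have hDt : Dᵀ = D := Matrix.diagonal_transpose d
          have hDdet : D.det = -1 := by
            rw [hD, Matrix.det_diagonal, hd]
            rw [Finset.prod_ite_eq' Finset.univ (0 : Fin (2 * n)) fun _ => (-1 : ℂ)]
            simp
          refine ⟨D * A, (Matrix.isUnit_iff_isUnit_det _).2 ?_, ?_⟩
          · rw [Matrix.det_mul, hDdet]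
            rw [Matrix.isUnit_iff_isUnit_det] at hAu
            simpa [isUnit_iff_ne_zero] using hAu
          · have h1 : (D * A)ᵀ * (D * A) = q := by
              rw [Matrix.transpose_mul, hDt, Matrix.mul_assoc, ← Matrix.mul_assoc D D A, hDD,
                Matrix.one_mul, hA]
            have h2 : (D * A).det = ε := by rw [Matrix.det_mul, hDdet, h]; ring
            show ((D * A)ᵀ * (D * A), (D * A).det) = (q, ε)
            rw [h1, h2]
      · rintro ⟨q, ε⟩ ⟨A, hAu, hAeq⟩
        rw [hX]
        obtain ⟨h1, h2⟩ := Prod.mk.injEq .. ▸ hAeq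
        refine ⟨?_, ?_, ?_⟩
        · simp only [← h1]
          show (Aᵀ * A)ᵀ = Aᵀ * A
          rw [Matrix.transpose_mul, Matrix.transpose_transpose]
        · rw [← h1]
          have hAu' : IsUnit A := hAu
          exact ((Matrix.isUnit_iff_isUnit_det _).2 (by
            rw [Matrix.det_transpose]
            exact (Matrix.isUnit_iff_isUnit_det A).1 hAu')).mul hAu'
        · show ε ^ 2 = q.det
          rw [← h1, ← h2, Matrix.det_mul, Matrix.det_transpose, _root_.sq]
    rw [himg]
    exact (aux_pathConn.image hφc).isConnected
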